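/- arXiv:2006.12875 — 5 statements merged into one kernel-verified Lean document; each statement's English description precedes it below -/
import Mathlib

section
/- The nullity of an n×n circulant matrix Y equals the sum of φ(d) over all divisors d of n such that the cyclotomic polynomial Φ_d(x) divides the associated polynomial Ψ(Y,x), where φ is Euler's totient function. -/
open Polynomial
open scoped Classical

lemma pow_mod_of_pow_eq_one' {ζ : ℂ} {n : ℕ} (h : ζ ^ n = 1) (a : ℕ) :
    ζ ^ (a % n) = ζ ^ a := by
  conv_rhs => rw [← Nat.div_add_mod a n]
  rw [pow_add, pow_mul, h, one_pow, one_mul]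

/-- The nullity (over ℂ) of a rational circulant matrix equals the sum of φ(d) over the
divisors d of n for which Φ_d divides the associated polynomial. -/
theorem stmt4 (n : ℕ) [NeZero n] (y : Fin n → ℚ) (M : Matrix (Fin n) (Fin n) ℚ)
    (hM : ∀ i j, M i j = y (j - i)) :
    Module.finrank ℂ (LinearMap.ker (Matrix.toLin' (M.map ((↑) : ℚ → ℂ)))) =
      ∑ d ∈ n.divisors.filter
          (fun d => cyclotomic d ℚ ∣ ∑ j : Fin n, C (y j) * X ^ (j : ℕ)),
        Nat.totient d := by
  have hn : n ≠ 0 := NeZero.ne n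
  have hnpos : 0 < n := Nat.pos_of_ne_zero hn
  set Ψ : ℚ[X] := ∑ j : Fin n, C (y j) * X ^ (j : ℕ) with hΨ
  set ω : ℂ := Complex.exp (2 * Real.pi * Complex.I / n) with hω
  have hprim : IsPrimitiveRoot ω n := Complex.isPrimitiveRoot_exp n hn
  have hωn : ω ^ n = 1 := hprim.pow_eq_one
  have haev : ∀ x : ℂ, (aeval x) Ψ = ∑ j : Fin n, (y j : ℂ) * x ^ (j : ℕ) := by
    intro x
    simp [hΨ]
  set A : Matrix (Fin n) (Fin n) ℂ := M.map ((↑) : ℚ → ℂ) with hA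
  set F : Matrix (Fin n) (Fin n) ℂ := Matrix.vandermonde (fun k : Fin n => ω ^ (k : ℕ)) with hF
  set D : Matrix (Fin n) (Fin n) ℂ :=
    Matrix.diagonal (fun k : Fin n => (aeval (ω ^ (k : ℕ))) Ψ) with hD
  -- the diagonalization identity
  have key : A * F = F * D := by
    ext i k
    have hζn : (ω ^ (k : ℕ)) ^ n = 1 := by
      rw [← pow_mul, mul_comm, pow_mul, hωn, one_pow]
    set ζ : ℂ := ω ^ (k : ℕ) with hζ
    have lhs : (A * F) i k = ∑ j : Fin n, (y (j - i) : ℂ) * ζ ^ (j : ℕ) := by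
      rw [Matrix.mul_apply]
      refine Finset.sum_congr rfl fun j _ => ?_
      rw [hA, hF, Matrix.map_apply, hM, Matrix.vandermonde_apply, hζ,
        ← pow_mul, ← pow_mul, Nat.mul_comm (j : ℕ) (k : ℕ), mul_comm]
    have rhs : (F * D) i k = ζ ^ (i : ℕ) * (aeval ζ) Ψ := by
      rw [hD, Matrix.mul_diagonal, hF, Matrix.vandermonde_apply, hζ,
        ← pow_mul, ← pow_mul, Nat.mul_comm (i : ℕ) (k : ℕ)]
    rw [lhs, rhs, haev, Finset.mul_sum]
    calc ∑ j : Fin n, (y (j - i) : ℂ) * ζ ^ (j : ℕ)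
        = ∑ m : Fin n, (y m : ℂ) * ζ ^ ((i + m : Fin n) : ℕ) := by
          refine (Fintype.sum_equiv (Equiv.addLeft i) _ _ fun m => ?_).symm
          simp [add_sub_cancel_left]
      _ = ∑ m : Fin n, ζ ^ (i : ℕ) * ((y m : ℂ) * ζ ^ (m : ℕ)) := by
          refine Finset.sum_congr rfl fun m _ => ?_
          rw [Fin.val_add, pow_mod_of_pow_eq_one' hζn, pow_add]
          ring
  -- F is invertible
  have hFdet : IsUnit F.det := by
    rw [hF, Matrix.det_vandermonde, isUnit_iff_ne_zero]
    refine Finset.prod_ne_zero_iff.2 fun i _ => Finset.prod_ne_zero_iff.2 fun j hj => ?_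
    rw [Finset.mem_Ioi] at hj
    exact sub_ne_zero.2 fun h => Fin.ne_of_gt hj (Fin.ext (hprim.pow_inj j.isLt i.isLt h))
  -- rank of A
  have hrank : A.rank = Fintype.card {k : Fin n // (aeval (ω ^ (k : ℕ))) Ψ ≠ 0} := by
    rw [← Matrix.rank_mul_eq_left_of_isUnit_det F A hFdet, key,
      Matrix.rank_mul_eq_right_of_isUnit_det F D hFdet, hD, Matrix.rank_diagonal]
  -- nullity = n - rank
  have hrn : A.rank + Module.finrank ℂ (LinearMap.ker (Matrix.toLin' A)) = n := by
    have h1 := LinearMap.finrank_range_add_finrank_ker (Matrix.toLin' A)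
    rw [Module.finrank_pi, Fintype.card_fin] at h1
    rw [Matrix.rank, ← Matrix.toLin'_apply']
    exact h1
  have hcard : Fintype.card {k : Fin n // (aeval (ω ^ (k : ℕ))) Ψ ≠ 0}
      = n - Fintype.card {k : Fin n // (aeval (ω ^ (k : ℕ))) Ψ = 0} := by
    simpa using Fintype.card_subtype_compl (fun k : Fin n => (aeval (ω ^ (k : ℕ))) Ψ = 0)
  have hle : Fintype.card {k : Fin n // (aeval (ω ^ (k : ℕ))) Ψ = 0} ≤ n := by
    simpa using Fintype.card_subtype_le (fun k : Fin n => (aeval (ω ^ (k : ℕ))) Ψ = 0)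
  -- counting the kernel dimension as a filter card
  have hker : Module.finrank ℂ (LinearMap.ker (Matrix.toLin' A))
      = Fintype.card {k : Fin n // (aeval (ω ^ (k : ℕ))) Ψ = 0} := by
    omega
  rw [hker]
  -- now the counting argument
  rw [Fintype.card_subtype]
  -- transfer to nth roots of unity
  have hbij : (Finset.univ.filter (fun k : Fin n => (aeval (ω ^ (k : ℕ))) Ψ = 0)).card
      = ((nthRootsFinset n (1 : ℂ)).filter (fun x => (aeval x) Ψ = 0)).card := by
    refine Finset.card_bij (fun k _ => ω ^ (k : ℕ)) ?_ ?_ ?_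
    · intro k hk
      rw [Finset.mem_filter] at hk ⊢
      refine ⟨(mem_nthRootsFinset hnpos 1).2 ?_, hk.2⟩
      rw [← pow_mul, mul_comm, pow_mul, hωn, one_pow]
    · intro a ha b hb H
      rw [Finset.mem_filter] at ha hb
      exact Fin.ext (hprim.pow_inj a.isLt b.isLt H)
    · intro x hx
      rw [Finset.mem_filter, mem_nthRootsFinset hnpos 1] at hx
      obtain ⟨i, hik, rfl⟩ := hprim.eq_pow_of_pow_eq_one hx.1
      exact ⟨⟨i, hik⟩, Finset.mem_filter.2 ⟨Finset.mem_univ _, hx.2⟩, rfl⟩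
  rw [hbij, IsPrimitiveRoot.nthRoots_one_eq_biUnion_primitiveRoots, Finset.filter_biUnion,
    Finset.card_biUnion (fun a _ b _ hab => Finset.disjoint_filter_filter
      (IsPrimitiveRoot.disjoint hab))]
  rw [Finset.sum_filter]
  refine Finset.sum_congr rfl fun d hd => ?_
  have hdpos : 0 < d := Nat.pos_of_mem_divisors hd
  by_cases hdvd : cyclotomic d ℚ ∣ Ψ
  · rw [if_pos hdvd, Finset.filter_true_of_mem, (Complex.isPrimitiveRoot_exp d
      hdpos.ne').card_primitiveRoots]
    intro x hx
    have hx' : IsPrimitiveRoot x d := (mem_primitiveRoots hdpos).1 hx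
    obtain ⟨c, hc⟩ := hdvd
    rw [hc, map_mul, cyclotomic_eq_minpoly_rat hx' hdpos, minpoly.aeval, zero_mul]
  · rw [if_neg hdvd, Finset.filter_false_of_mem, Finset.card_empty]
    intro x hx hax
    have hx' : IsPrimitiveRoot x d := (mem_primitiveRoots hdpos).1 hx
    exact hdvd (cyclotomic_eq_minpoly_rat hx' hdpos ▸ minpoly.dvd ℚ x hax)
end

section
/- Let Γ = Cay(C_n, H) be a Cayley graph of the cyclic group C_n = ⟨a⟩ with vertices a, a², …, a^n, and let Ψ_Γ(x) = m_2 x + ⋯ + m_n x^{n−1} where m_i = 1 if a ∼ a^i and 0 otherwise. Then Γ is singular if and only if Φ_d(x) divides Ψ_Γ(x) for some divisor d of n. -/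
open Polynomial
open scoped Classical

/-- Bijection between `Fin n` and `ZMod n`. -/
noncomputable def finZmodEquiv (n : ℕ) [NeZero n] : Fin n ≃ ZMod n where
  toFun k := ((k : ℕ) : ZMod n)
  invFun x := ⟨x.val, x.val_lt⟩
  left_inv k := by
    ext
    simp [ZMod.val_cast_of_lt k.isLt]
  right_inv x := ZMod.natCast_rightInverse x

lemma sum_finZmod {n : ℕ} [NeZero n] (g : ZMod n → ℂ) :
    ∑ i : Fin n, g (((i : ℕ) : ZMod n)) = ∑ x : ZMod n, g x :=
  Fintype.sum_equiv (finZmodEquiv n) _ _ (fun _ => rfl)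

lemma det_circulant_complex (n : ℕ) [NeZero n] (g : ZMod n → ℂ) (ζ : ℂ)
    (hζ : IsPrimitiveRoot ζ n) :
    Matrix.det (Matrix.of fun i j : Fin n => g (((j : ℕ) : ZMod n) - ((i : ℕ) : ZMod n))) =
      ∏ j : Fin n, ∑ x : ZMod n, g x * ζ ^ (x.val * (j : ℕ)) := by
  have npos : 0 < n := Nat.pos_of_ne_zero (NeZero.ne n)
  have hz : ∀ m : ℕ, ζ ^ (m % n) = ζ ^ m := by
    intro m
    conv_rhs => rw [← Nat.mod_add_div m n]
    rw [pow_add, pow_mul, hζ.pow_eq_one, one_pow, mul_one]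
  have hval : ∀ (x y : ZMod n) (t : ℕ),
      ζ ^ ((x + y).val * t) = ζ ^ (x.val * t) * ζ ^ (y.val * t) := by
    intro x y t
    rw [ZMod.val_add, pow_mul, hz, ← pow_mul, add_mul, pow_add]
  set M : Matrix (Fin n) (Fin n) ℂ :=
    Matrix.of fun i j : Fin n => g (((j : ℕ) : ZMod n) - ((i : ℕ) : ZMod n)) with hM
  set W : Matrix (Fin n) (Fin n) ℂ := Matrix.vandermonde (fun i : Fin n => ζ ^ (i : ℕ)) with hW
  have hWij : ∀ i j : Fin n, W i j = ζ ^ ((i : ℕ) * (j : ℕ)) := by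
    intro i j; rw [hW, Matrix.vandermonde_apply, ← pow_mul]
  set d : Fin n → ℂ := fun j => ∑ x : ZMod n, g x * ζ ^ (x.val * (j : ℕ)) with hd
  have key : M * W = W * Matrix.diagonal d := by
    ext i j
    rw [Matrix.mul_apply, Matrix.mul_diagonal, hWij]
    have step1 : ∑ k : Fin n, M i k * W k j
        = ∑ x : ZMod n, g (x - ((i : ℕ) : ZMod n)) * ζ ^ (x.val * (j : ℕ)) := by
      rw [← sum_finZmod (fun x => g (x - ((i : ℕ) : ZMod n)) * ζ ^ (x.val * (j : ℕ)))]
      refine Finset.sum_congr rfl fun k _ => ?_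
      rw [hWij, hM]
      simp only [Matrix.of_apply]
      rw [ZMod.val_cast_of_lt k.isLt]
    rw [step1]
    have step2 : ∑ x : ZMod n, g (x - ((i : ℕ) : ZMod n)) * ζ ^ (x.val * (j : ℕ))
        = ∑ y : ZMod n, g y * ζ ^ ((y + ((i : ℕ) : ZMod n)).val * (j : ℕ)) := by
      refine Fintype.sum_equiv (Equiv.subRight ((i : ℕ) : ZMod n)) _ _ fun x => ?_
      simp
    rw [step2]
    have step3 : ∀ y : ZMod n, g y * ζ ^ ((y + ((i : ℕ) : ZMod n)).val * (j : ℕ))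
        = (g y * ζ ^ (y.val * (j : ℕ))) * ζ ^ ((i : ℕ) * (j : ℕ)) := by
      intro y
      rw [hval, ZMod.val_cast_of_lt i.isLt, mul_assoc]
    rw [Finset.sum_congr rfl (fun y _ => step3 y), ← Finset.sum_mul, hd]
    ring
  have hdetW : W.det ≠ 0 := by
    rw [hW, Matrix.det_vandermonde]
    refine Finset.prod_ne_zero_iff.mpr fun i _ => Finset.prod_ne_zero_iff.mpr fun j hj => ?_
    have hij : i < j := Finset.mem_Ioi.mp hj
    intro h0
    exact hij.ne' (Fin.ext (hζ.pow_inj j.isLt i.isLt (sub_eq_zero.mp h0)))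
  have := congrArg Matrix.det key
  rw [Matrix.det_mul, Matrix.det_mul, Matrix.det_diagonal] at this
  rw [mul_comm W.det _] at this
  exact mul_right_cancel₀ hdetW this

/-- A connecting set: closed under inverses, avoids the identity, and generates G. -/
def ConnectingSet {G : Type*} [Group G] (H : Set G) : Prop :=
  (∀ h ∈ H, h⁻¹ ∈ H) ∧ (1 : G) ∉ H ∧ Subgroup.closure H = ⊤

/-- The Cayley graph of G with connecting set H: u ∼ v iff v * u⁻¹ ∈ H. -/
def CayleyGraph {G : Type*} [Group G] (H : Set G) : SimpleGraph G :=
  SimpleGraph.fromRel (fun u v => v * u⁻¹ ∈ H)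

/-- A cyclic Cayley graph Cay(C_n,H) is singular iff some cyclotomic polynomial Φ_d with
d ∣ n divides the polynomial Ψ_Γ(x) = Σ m_i x^{i-1}, where m_i = 1 iff a ∼ a^i. -/
theorem stmt11 (n : ℕ) [NeZero n] (H : Set (Multiplicative (ZMod n)))
    (hH : ConnectingSet H) (a : Multiplicative (ZMod n))
    (ha : a = Multiplicative.ofAdd (1 : ZMod n))
    (A : Matrix (Fin n) (Fin n) ℝ)
    (hA : ∀ i j : Fin n,
      A i j = if (CayleyGraph H).Adj (a ^ ((i : ℕ) + 1)) (a ^ ((j : ℕ) + 1)) then 1 else 0) :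
    A.det = 0 ↔ ∃ d ∈ n.divisors,
      cyclotomic d ℝ ∣ ∑ i : Fin n,
        C (if (CayleyGraph H).Adj a (a ^ ((i : ℕ) + 1)) then (1 : ℝ) else 0) * X ^ (i : ℕ) := by
  obtain ⟨hinv, hone, -⟩ := hH
  have npos : 0 < n := Nat.pos_of_ne_zero (NeZero.ne n)
  -- adjacency simplification
  have hadj : ∀ u v : Multiplicative (ZMod n),
      (CayleyGraph H).Adj u v ↔ v * u⁻¹ ∈ H := by
    intro u v
    rw [CayleyGraph, SimpleGraph.fromRel_adj]
    constructor
    · rintro ⟨-, h | h⟩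
      · exact h
      · have := hinv _ h
        rwa [mul_inv_rev, inv_inv] at this
    · intro h
      refine ⟨fun he => ?_, Or.inl h⟩
      rw [he, mul_inv_cancel] at h
      exact hone h
  have hpow : ∀ m : ℕ, a ^ m = Multiplicative.ofAdd ((m : ZMod n)) := by
    intro m
    rw [ha, ← ofAdd_nsmul]
    congr 1
    simp
  have hadjpow : ∀ p q : ℕ, ((CayleyGraph H).Adj (a ^ p) (a ^ q) ↔
      Multiplicative.ofAdd (((q : ZMod n)) - ((p : ZMod n))) ∈ H) := by
    intro p q
    rw [hadj, hpow, hpow, ← ofAdd_neg, ← ofAdd_add, ← sub_eq_add_neg]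
  -- the rational/real/complex coefficient functions
  set fq : ZMod n → ℚ := fun x => if Multiplicative.ofAdd x ∈ H then 1 else 0 with hfq
  set fc : ZMod n → ℂ := fun x => if Multiplicative.ofAdd x ∈ H then 1 else 0 with hfc
  set Pq : ℚ[X] := ∑ i : Fin n, C (fq ((i : ℕ) : ZMod n)) * X ^ (i : ℕ) with hPq
  set P : ℝ[X] := ∑ i : Fin n,
      C (if (CayleyGraph H).Adj a (a ^ ((i : ℕ) + 1)) then (1 : ℝ) else 0) * X ^ (i : ℕ) with hP
  have hcoef : ∀ i : Fin n,
      ((CayleyGraph H).Adj a (a ^ ((i : ℕ) + 1)) ↔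
        Multiplicative.ofAdd (((i : ℕ) : ZMod n)) ∈ H) := by
    intro i
    have h2 := hadjpow 1 ((i : ℕ) + 1)
    rw [pow_one] at h2
    have h3 : ((((i : ℕ) + 1 : ℕ)) : ZMod n) - ((1 : ℕ) : ZMod n) = ((i : ℕ) : ZMod n) := by
      push_cast; ring
    rw [h3] at h2
    exact h2
  set Pc : ℂ[X] := Pq.map (algebraMap ℚ ℂ) with hPc
  have hfqc : ∀ x : ZMod n, algebraMap ℚ ℂ (fq x) = fc x := by
    intro x; rw [hfq, hfc]; simp [apply_ite (algebraMap ℚ ℂ)]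
  have hfqr : ∀ x : ZMod n,
      algebraMap ℚ ℝ (fq x) = (if Multiplicative.ofAdd x ∈ H then (1 : ℝ) else 0) := by
    intro x; rw [hfq]; simp [apply_ite (algebraMap ℚ ℝ)]
  have hPmap : Pq.map (algebraMap ℚ ℝ) = P := by
    rw [hPq, hP, Polynomial.map_sum]
    refine Finset.sum_congr rfl fun i _ => ?_
    rw [Polynomial.map_mul, Polynomial.map_pow, map_X, map_C, hfqr]
    congr 1
    exact congrArg C (if_congr ((hcoef i).symm) rfl rfl)
  have heval : ∀ z : ℂ, Pc.eval z = ∑ x : ZMod n, fc x * z ^ x.val := by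
    intro z
    rw [hPc, hPq, Polynomial.map_sum, Polynomial.eval_finset_sum,
      ← sum_finZmod (fun x => fc x * z ^ x.val)]
    refine Finset.sum_congr rfl fun i _ => ?_
    rw [Polynomial.map_mul, Polynomial.map_pow, map_X, map_C, eval_mul, eval_C, eval_pow,
      eval_X, hfqc, ZMod.val_cast_of_lt i.isLt]
  set ζ : ℂ := Complex.exp (2 * Real.pi * Complex.I / n) with hzeta
  have hζ : IsPrimitiveRoot ζ n := Complex.isPrimitiveRoot_exp n (NeZero.ne n)
  have hz : ∀ m : ℕ, ζ ^ (m % n) = ζ ^ m := by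
    intro m
    conv_rhs => rw [← Nat.mod_add_div m n]
    rw [pow_add, pow_mul, hζ.pow_eq_one, one_pow, mul_one]
  have hdet : (Complex.ofRealHom.mapMatrix A).det = ∏ j : Fin n, Pc.eval (ζ ^ (j : ℕ)) := by
    have hmat : Complex.ofRealHom.mapMatrix A =
        Matrix.of (fun i j : Fin n => fc (((j : ℕ) : ZMod n) - ((i : ℕ) : ZMod n))) := by
      ext i j
      simp only [RingHom.mapMatrix_apply, Matrix.map_apply, Matrix.of_apply]
      rw [hA i j]
      have h4 : ((CayleyGraph H).Adj (a ^ ((i : ℕ) + 1)) (a ^ ((j : ℕ) + 1)) ↔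
          Multiplicative.ofAdd (((j : ℕ) : ZMod n) - ((i : ℕ) : ZMod n)) ∈ H) := by
        have h5 : ((((j : ℕ) + 1 : ℕ)) : ZMod n) - ((((i : ℕ) + 1 : ℕ)) : ZMod n)
            = ((j : ℕ) : ZMod n) - ((i : ℕ) : ZMod n) := by push_cast; ring
        rw [hadjpow, h5]
      rw [hfc]
      simp only []
      rw [apply_ite Complex.ofRealHom, map_one, map_zero, if_congr h4 rfl rfl]
    rw [hmat, det_circulant_complex n fc ζ hζ]
    refine Finset.prod_congr rfl fun j _ => ?_
    rw [heval]
    refine Finset.sum_congr rfl fun x _ => ?_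
    rw [← pow_mul, mul_comm (x.val) ((j : ℕ))]
  have hdetiff : A.det = 0 ↔ ∃ j : Fin n, Pc.eval (ζ ^ (j : ℕ)) = 0 := by
    constructor
    · intro h
      have h0 : (Complex.ofRealHom.mapMatrix A).det = 0 := by
        rw [← RingHom.map_det, h, map_zero]
      rw [hdet] at h0
      obtain ⟨j, -, hj⟩ := Finset.prod_eq_zero_iff.mp h0
      exact ⟨j, hj⟩
    · rintro ⟨j, hj⟩
      have h0 : (Complex.ofRealHom.mapMatrix A).det = 0 := by
        rw [hdet]; exact Finset.prod_eq_zero (Finset.mem_univ j) hj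
      rw [← RingHom.map_det] at h0
      exact Complex.ofReal_eq_zero.mp h0
  rw [hdetiff]
  constructor
  · rintro ⟨j, hj⟩
    set μ := ζ ^ (j : ℕ) with hμ
    have hμn : μ ^ n = 1 := by
      rw [hμ, ← pow_mul, mul_comm, pow_mul, hζ.pow_eq_one, one_pow]
    have hfin : IsOfFinOrder μ := isOfFinOrder_iff_pow_eq_one.mpr ⟨n, npos, hμn⟩
    have hd0 : 0 < orderOf μ := hfin.orderOf_pos
    have hddvd : orderOf μ ∣ n := orderOf_dvd_of_pow_eq_one hμn
    have hprim : IsPrimitiveRoot μ (orderOf μ) := IsPrimitiveRoot.orderOf μ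
    have hmin : cyclotomic (orderOf μ) ℚ = minpoly ℚ μ := cyclotomic_eq_minpoly_rat hprim hd0
    have haev : (aeval μ) Pq = 0 := by
      rw [aeval_def, ← Polynomial.eval_map]
      exact hj
    refine ⟨orderOf μ, Nat.mem_divisors.mpr ⟨hddvd, NeZero.ne n⟩, ?_⟩
    have hq : cyclotomic (orderOf μ) ℚ ∣ Pq := hmin ▸ minpoly.dvd ℚ μ haev
    obtain ⟨r, hr⟩ := hq
    refine ⟨r.map (algebraMap ℚ ℝ), ?_⟩
    rw [← hPmap, hr, Polynomial.map_mul, map_cyclotomic]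
  · rintro ⟨d, hdmem, hdvd⟩
    obtain ⟨hddvd, -⟩ := Nat.mem_divisors.mp hdmem
    have hd0 : 0 < d := Nat.pos_of_mem_divisors hdmem
    obtain ⟨m, hm⟩ := hddvd
    have hprim : IsPrimitiveRoot (ζ ^ m) d := hζ.pow npos (by rw [hm]; ring)
    have hq : cyclotomic d ℚ ∣ Pq := by
      rw [← hPmap, ← map_cyclotomic d (algebraMap ℚ ℝ)] at hdvd
      exact (map_dvd_map _ (algebraMap ℚ ℝ).injective (cyclotomic.monic d ℚ)).mp hdvd
    have hmin : cyclotomic d ℚ = minpoly ℚ (ζ ^ m) := cyclotomic_eq_minpoly_rat hprim hd0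
    obtain ⟨q, hqq⟩ := hmin ▸ hq
    have haev : (aeval (ζ ^ m)) Pq = 0 := by
      rw [hqq, map_mul, minpoly.aeval, zero_mul]
    have hev : Pc.eval (ζ ^ m) = 0 := by
      rw [hPc, Polynomial.eval_map, ← aeval_def]
      exact haev
    refine ⟨⟨m % n, Nat.mod_lt _ npos⟩, ?_⟩
    show Pc.eval (ζ ^ (m % n)) = 0
    rw [hz m]
    exact hev
end

section
/- A Cayley graph of a cyclic group of prime order with at least one edge is non-singular. -/
open Polynomial
open scoped Classical

section Aux

variable {p : ℕ} [Fact p.Prime]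

/-- Permutation matrix of left multiplication by `h`. -/
noncomputable def cayP (p : ℕ) (h : Multiplicative (ZMod p)) :
    Matrix (Multiplicative (ZMod p)) (Multiplicative (ZMod p)) (ZMod p) :=
  Matrix.of fun x y => if y = h * x then 1 else 0

lemma cayP_mul (h k : Multiplicative (ZMod p)) : cayP p h * cayP p k = cayP p (h * k) := by
  ext x y
  simp only [Matrix.mul_apply, cayP, Matrix.of_apply, ite_mul, one_mul, zero_mul]
  rw [Finset.sum_ite_eq' Finset.univ (h * x) (fun z => if y = k * z then (1:ZMod p) else 0)]
  simp [mul_comm, mul_left_comm, mul_assoc]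

lemma cayP_one : cayP p (1 : Multiplicative (ZMod p)) = 1 := by
  ext x y
  simp [cayP, Matrix.one_apply, eq_comm]

lemma cayP_pow (h : Multiplicative (ZMod p)) (n : ℕ) : cayP p h ^ n = cayP p (h ^ n) := by
  induction n with
  | zero => simp [cayP_one]
  | succ n ih => rw [pow_succ, ih, cayP_mul, ← pow_succ]

end Aux

/-- A Cayley graph of a cyclic group of prime order with at least one edge is
non-singular. -/
theorem stmt12 (p : ℕ) [Fact p.Prime] (H : Set (Multiplicative (ZMod p)))
    (hH : ConnectingSet H) (hne : H.Nonempty) :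
    ((CayleyGraph H).adjMatrix ℝ).det ≠ 0 := by
  obtain ⟨hsym, hone, -⟩ := hH
  have hp : p.Prime := Fact.out
  haveI : NeZero p := ⟨hp.ne_zero⟩
  have hcardG : Fintype.card (Multiplicative (ZMod p)) = p := by simp [ZMod.card]
  haveI : Nonempty (Multiplicative (ZMod p)) :=
    Fintype.card_pos_iff.mp (by rw [hcardG]; exact hp.pos)
  -- adjacency characterization
  have hadj : ∀ x y : Multiplicative (ZMod p), (CayleyGraph H).Adj x y ↔ y * x⁻¹ ∈ H := by
    intro x y
    rw [show (CayleyGraph H).Adj x y ↔ x ≠ y ∧ (y * x⁻¹ ∈ H ∨ x * y⁻¹ ∈ H) from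
      SimpleGraph.fromRel_adj _ x y]
    constructor
    · rintro ⟨hne', h | h⟩
      · exact h
      · have := hsym _ h
        simpa using this
    · intro h
      refine ⟨?_, Or.inl h⟩
      rintro rfl
      simp at h
      exact hone h
  -- the adjacency matrix over ZMod p
  set A : Matrix (Multiplicative (ZMod p)) (Multiplicative (ZMod p)) (ZMod p) :=
    (CayleyGraph H).adjMatrix (ZMod p) with hA
  have hHfin : H.Finite := Set.toFinite H
  set Hs : Finset (Multiplicative (ZMod p)) := hHfin.toFinset with hHs
  have hAsum : A = ∑ h ∈ Hs, cayP p h := by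
    ext x y
    rw [Matrix.sum_apply]
    have h1 : ∀ h ∈ Hs, (cayP p h) x y = if h = y * x⁻¹ then (1 : ZMod p) else 0 := by
      intro h _
      simp only [cayP, Matrix.of_apply]
      exact if_congr (by rw [eq_comm, eq_mul_inv_iff_mul_eq]) rfl rfl
    rw [Finset.sum_congr rfl h1, Finset.sum_ite_eq' Hs (y * x⁻¹) (fun _ => (1 : ZMod p))]
    by_cases hmem : y * x⁻¹ ∈ H
    · rw [if_pos (hHfin.mem_toFinset.mpr hmem), hA, SimpleGraph.adjMatrix_apply,
        if_pos ((hadj x y).mpr hmem)]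
    · rw [if_neg (fun hc => hmem (hHfin.mem_toFinset.mp hc)), hA, SimpleGraph.adjMatrix_apply,
        if_neg (fun hc => hmem ((hadj x y).mp hc))]
  -- A ^ p = |H| • 1
  haveI : CharP (Matrix (Multiplicative (ZMod p)) (Multiplicative (ZMod p)) (ZMod p)) p :=
    Matrix.charP p
  have hsumpow : (∑ h ∈ Hs, cayP p h) ^ p = ∑ h ∈ Hs, cayP p h ^ p := by
    classical
    induction Hs using Finset.induction with
    | empty => simp [hp.pos.ne']
    | insert a s hx ih =>
      have hcomm : Commute (cayP p a) (∑ k ∈ s, cayP p k) := by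
        refine Commute.sum_right _ _ _ fun k hk => ?_
        unfold Commute SemiconjBy
        rw [cayP_mul, cayP_mul, mul_comm]
      rw [Finset.sum_insert hx, Finset.sum_insert hx,
        add_pow_char_of_commute _ hcomm, ih]
  have hApow : A ^ p = (Hs.card : ZMod p) • 1 := by
    rw [hAsum, hsumpow]
    have h2 : ∀ h ∈ Hs, cayP p h ^ p = 1 := by
      intro h _
      have h1 : h ^ p = 1 := by
        have h0 := pow_card_eq_one (x := h)
        rwa [hcardG] at h0
      rw [cayP_pow, h1, cayP_one]
    rw [Finset.sum_congr rfl h2, Finset.sum_const]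
    exact (Nat.cast_smul_eq_nsmul (ZMod p) _ _).symm
  -- card bounds
  have hcard_pos : 0 < Hs.card := by
    obtain ⟨a, ha⟩ := hne
    exact Finset.card_pos.mpr ⟨a, hHfin.mem_toFinset.mpr ha⟩
  have hcard_lt : Hs.card < p := by
    have h3 : Hs.card < Fintype.card (Multiplicative (ZMod p)) := by
      refine Finset.card_lt_card ?_
      rw [Finset.ssubset_univ_iff]
      intro h
      have : (1 : Multiplicative (ZMod p)) ∈ Hs := h ▸ Finset.mem_univ 1
      exact hone (hHfin.mem_toFinset.mp this)
    omega
  have hc_ne : (Hs.card : ZMod p) ≠ 0 := by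
    rw [Ne, ZMod.natCast_eq_zero_iff]
    exact fun hdvd => absurd (Nat.le_of_dvd hcard_pos hdvd) (not_le.mpr hcard_lt)
  -- det over ZMod p
  have hdetp : A.det = (Hs.card : ZMod p) := by
    have h1 : A.det ^ p = (Hs.card : ZMod p) ^ p := by
      rw [← Matrix.det_pow, hApow, Matrix.det_smul, Matrix.det_one, mul_one, hcardG]
    calc A.det = A.det ^ p := (ZMod.pow_card _).symm
    _ = (Hs.card : ZMod p) ^ p := h1
    _ = (Hs.card : ZMod p) := ZMod.pow_card _
  have hdetp_ne : A.det ≠ 0 := hdetp ▸ hc_ne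
  -- transfer: adjMatrix over ℤ
  have hmapZ : ∀ (R : Type) [CommRing R] (f : ℤ →+* R),
      (f.mapMatrix ((CayleyGraph H).adjMatrix ℤ)) = (CayleyGraph H).adjMatrix R := by
    intro R _ f
    ext x y
    simp [RingHom.mapMatrix_apply, Matrix.map_apply, SimpleGraph.adjMatrix, apply_ite f]
  have hZdet_ne : ((CayleyGraph H).adjMatrix ℤ).det ≠ 0 := by
    intro h0
    have h4 := (Int.castRingHom (ZMod p)).map_det ((CayleyGraph H).adjMatrix ℤ)
    rw [h0, hmapZ (ZMod p) (Int.castRingHom (ZMod p))] at h4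
    exact hdetp_ne (by rw [hA, ← h4]; simp)
  have h5 := (Int.castRingHom ℝ).map_det ((CayleyGraph H).adjMatrix ℤ)
  rw [hmapZ ℝ (Int.castRingHom ℝ)] at h5
  rw [← h5]
  exact Int.cast_ne_zero.mpr hZdet_ne
end

section
/- Let Γ = Cay(D_n, H) be a dihedral Cayley graph. Define Ψ'_Γ(x) = Σ u_i x^{i−1} and Ψ''_Γ(x) = Σ w_i x^{i−1}, where u_i (resp. w_i) is the number of walks of length 2 from a to a^i with intermediate vertex in C_n (resp. in D_n∖C_n). Then Γ is singular if and only if Φ_d(x) divides Ψ'_Γ(x) − Ψ''_Γ(x) for some divisor d of n. -/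
open Polynomial
open scoped Classical

namespace Stmt17Aux

variable {n : ℕ}

lemma r_inv (i : ZMod n) : (DihedralGroup.r i)⁻¹ = DihedralGroup.r (-i) :=
  inv_eq_of_mul_eq_one_right (by simp [DihedralGroup.one_def, -DihedralGroup.r_zero])

lemma sr_inv (i : ZMod n) : (DihedralGroup.sr i)⁻¹ = DihedralGroup.sr i :=
  inv_eq_of_mul_eq_one_right (by simp [DihedralGroup.one_def, -DihedralGroup.r_zero])

lemma r_injective : Function.Injective (DihedralGroup.r (n := n)) :=
  fun a b h => by injection h

lemma exists_root_iff_cyclotomic (n : ℕ) (hn : n ≠ 0) (P : ℤ[X]) :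
    (∃ ζ : ℂ, ζ ^ n = 1 ∧ (aeval ζ) P = 0) ↔ ∃ d ∈ n.divisors, cyclotomic d ℤ ∣ P := by
  constructor
  · rintro ⟨ζ, hζn, hζP⟩
    have hfin : IsOfFinOrder ζ := isOfFinOrder_iff_pow_eq_one.mpr ⟨n, Nat.pos_of_ne_zero hn, hζn⟩
    set d := orderOf ζ with hd
    have hd0 : 0 < d := hfin.orderOf_pos
    have hprim : IsPrimitiveRoot ζ d := IsPrimitiveRoot.orderOf ζ
    have hdvd : d ∣ n := orderOf_dvd_of_pow_eq_one hζn
    have h1 : minpoly ℚ ζ ∣ P.map (Int.castRingHom ℚ) := by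
      apply minpoly.dvd
      rw [show (Int.castRingHom ℚ) = algebraMap ℤ ℚ from rfl, aeval_map_algebraMap]
      exact hζP
    rw [← cyclotomic_eq_minpoly_rat hprim hd0, ← map_cyclotomic_int d ℚ] at h1
    exact ⟨d, Nat.mem_divisors.mpr ⟨hdvd, hn⟩,
      (map_dvd_map _ Int.cast_injective (cyclotomic.monic d ℤ)).mp h1⟩
  · rintro ⟨d, hd, hdvd⟩
    obtain ⟨hdn, -⟩ := Nat.mem_divisors.mp hd
    have hd0 : 0 < d := Nat.pos_of_mem_divisors hd
    have hμ : IsPrimitiveRoot (Complex.exp (2 * Real.pi * Complex.I / d)) d :=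
      Complex.isPrimitiveRoot_exp d hd0.ne'
    refine ⟨Complex.exp (2 * Real.pi * Complex.I / d), ?_, ?_⟩
    · obtain ⟨k, rfl⟩ := hdn
      rw [pow_mul, hμ.pow_eq_one, one_pow]
    · obtain ⟨q, rfl⟩ := hdvd
      rw [map_mul]
      have : (aeval (Complex.exp (2 * Real.pi * Complex.I / d))) (cyclotomic d ℤ) = 0 := by
        rw [aeval_def, eval₂_eq_eval_map,
          show algebraMap ℤ ℂ = Int.castRingHom ℂ from rfl, map_cyclotomic_int]
        exact hμ.isRoot_cyclotomic hd0
      rw [this, zero_mul]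

def finEquiv (n : ℕ) [NeZero n] : Fin n ≃ ZMod n where
  toFun i := ((i : ℕ) : ZMod n)
  invFun m := ⟨m.val, m.val_lt⟩
  left_inv i := by ext; simp [ZMod.val_cast_of_lt i.isLt]
  right_inv m := by simp [ZMod.natCast_rightInverse m]

lemma finEquiv_apply (n : ℕ) [NeZero n] (i : Fin n) : finEquiv n i = ((i : ℕ) : ZMod n) := rfl

lemma finEquiv_val [NeZero n] (i : Fin n) : ((finEquiv n i) : ZMod n).val = (i : ℕ) :=
  ZMod.val_cast_of_lt i.isLt

lemma det_circulant_eq_zero_iff [NeZero n] (c : ZMod n → ℤ) :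
    (Matrix.circulant c).det = 0 ↔
      ∃ ζ : ℂ, ζ ^ n = 1 ∧ ∑ m : ZMod n, (c m : ℂ) * ζ ^ m.val = 0 := by
  have hn : n ≠ 0 := NeZero.ne n
  set ω : ℂ := Complex.exp (2 * Real.pi * Complex.I / n) with hωdef
  have hω : IsPrimitiveRoot ω n := Complex.isPrimitiveRoot_exp n hn
  set χ : ZMod n → ℂ := fun m => ω ^ m.val with hχdef
  have hmod : ∀ a : ℕ, ω ^ (a % n) = ω ^ a := by
    intro a
    conv_rhs => rw [← Nat.div_add_mod a n]
    rw [pow_add, pow_mul, hω.pow_eq_one, one_pow, one_mul]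
  have hχcast : ∀ a : ℕ, χ ((a : ZMod n)) = ω ^ a := by
    intro a; simp only [hχdef, ZMod.val_natCast, hmod]
  have hχadd : ∀ x y : ZMod n, χ (x + y) = χ x * χ y := by
    intro x y
    simp only [hχdef]
    rw [ZMod.val_add, hmod, pow_add]
  have hχmul : ∀ x y : ZMod n, χ (x * y) = χ y ^ x.val := by
    intro x y
    simp only [hχdef]
    rw [ZMod.val_mul, hmod, ← pow_mul, mul_comm x.val y.val]
  have hχpow : ∀ x : ZMod n, χ x ^ n = 1 := by
    intro x; simp only [hχdef]
    rw [← pow_mul, mul_comm, pow_mul, hω.pow_eq_one, one_pow]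
  have hχinj : Function.Injective χ := by
    intro x y h
    have := hω.pow_inj x.val_lt y.val_lt h
    exact ZMod.val_injective n this
  -- the DFT matrix
  set F : Matrix (ZMod n) (ZMod n) ℂ := Matrix.of (fun i j => χ (i * j)) with hFdef
  set Dd : ZMod n → ℂ := fun j => ∑ m : ZMod n, (c m : ℂ) * χ (-(m * j)) with hDdef
  set Cc : Matrix (ZMod n) (ZMod n) ℂ := Matrix.circulant (fun m => (c m : ℂ)) with hCcdef
  have key : Cc * F = F * Matrix.diagonal Dd := by
    ext i j
    rw [Matrix.mul_apply, Matrix.mul_diagonal]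
    have h1 : ∀ k : ZMod n, Cc i k * F k j = (c (i - k) : ℂ) * χ (k * j) := by
      intro k; simp [hCcdef, hFdef, Matrix.circulant_apply]
    simp only [h1]
    rw [← Equiv.sum_comp (Equiv.subLeft i)]
    have h2 : ∀ m : ZMod n, (c (i - (Equiv.subLeft i m)) : ℂ) * χ ((Equiv.subLeft i m) * j)
        = (F i j * (c m : ℂ)) * χ (-(m * j)) := by
      intro m
      simp only [Equiv.subLeft_apply, sub_sub_cancel, hFdef, Matrix.of_apply]
      have : (i - m) * j = i * j + -(m * j) := by ring
      rw [this, hχadd]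
      ring
    simp only [h2, mul_assoc, ← Finset.mul_sum]
    rfl
  have hFdet : F.det ≠ 0 := by
    have hsub : F.submatrix (finEquiv n) (finEquiv n) =
        Matrix.vandermonde (fun i : Fin n => χ (finEquiv n i)) := by
      ext i j
      simp only [Matrix.submatrix_apply, hFdef, Matrix.of_apply, Matrix.vandermonde_apply]
      rw [mul_comm, hχmul, finEquiv_val]
    have : F.det = (F.submatrix (finEquiv n) (finEquiv n)).det :=
      (Matrix.det_submatrix_equiv_self _ _).symm
    rw [this, hsub, Matrix.det_vandermonde]
    apply Finset.prod_ne_zero_iff.mpr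
    intro i _
    apply Finset.prod_ne_zero_iff.mpr
    intro j hj
    have hij : i ≠ j := (Finset.mem_Ioi.mp hj).ne
    exact sub_ne_zero.mpr fun h => hij (((finEquiv n).injective (hχinj h)).symm)
  have hdetCc : Cc.det = ∏ j : ZMod n, Dd j := by
    have := congrArg Matrix.det key
    rw [Matrix.det_mul, Matrix.det_mul, Matrix.det_diagonal] at this
    exact mul_right_cancel₀ hFdet (by rw [this]; ring)
  have hcast : (Matrix.circulant c).det = 0 ↔ Cc.det = 0 := by
    have hmap : Cc = (Matrix.circulant c).map (Int.cast : ℤ → ℂ) := by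
      rw [hCcdef, Matrix.map_circulant]
    rw [hmap, show (Int.cast : ℤ → ℂ) = ⇑(Int.castRingHom ℂ) from rfl,
      ← RingHom.mapMatrix_apply, ← RingHom.map_det]
    simp [Int.cast_eq_zero]
  rw [hcast, hdetCc, Finset.prod_eq_zero_iff]
  constructor
  · rintro ⟨j, -, hj⟩
    refine ⟨χ (-j), hχpow _, ?_⟩
    rw [← hj, hDdef]
    apply Finset.sum_congr rfl
    intro m _
    rw [show -(m * j) = m * (-j) by ring, hχmul]
  · rintro ⟨ζ, hζn, hζ⟩
    obtain ⟨k, hk, rfl⟩ := hω.eq_pow_of_pow_eq_one hζn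
    refine ⟨-((k : ZMod n)), Finset.mem_univ _, ?_⟩
    rw [hDdef, ← hζ]
    apply Finset.sum_congr rfl
    intro m _
    rw [show -(m * -((k:ZMod n))) = m * ((k:ZMod n)) by ring, hχmul, hχcast]

lemma adj_iff {G : Type*} [Group G] {H : Set G} (hH : ConnectingSet H) (u v : G) :
    (CayleyGraph H).Adj u v ↔ v * u⁻¹ ∈ H := by
  rw [CayleyGraph, SimpleGraph.fromRel_adj]
  constructor
  · rintro ⟨hne, h | h⟩
    · exact h
    · have := hH.1 _ h
      simpa [mul_inv_rev] using this
  · intro h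
    refine ⟨?_, Or.inl h⟩
    rintro rfl
    rw [mul_inv_cancel] at h
    exact hH.2.1 h

/-- ZMod n ⊕ ZMod n ≃ DihedralGroup n -/

def sumEquiv (n : ℕ) : (ZMod n) ⊕ (ZMod n) ≃ DihedralGroup n where
  toFun x := match x with
    | Sum.inl j => DihedralGroup.r j
    | Sum.inr j => DihedralGroup.sr j
  invFun z := match z with
    | DihedralGroup.r j => Sum.inl j
    | DihedralGroup.sr j => Sum.inr j
  left_inv := by rintro (x | x) <;> rfl
  right_inv := by rintro (x | x) <;> rfl

@[simp] lemma sumEquiv_inl {n : ℕ} (i : ZMod n) : sumEquiv n (Sum.inl i) = DihedralGroup.r i := rfl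

@[simp] lemma sumEquiv_inr {n : ℕ} (i : ZMod n) : sumEquiv n (Sum.inr i) = DihedralGroup.sr i := rfl

lemma ncard_helper [NeZero n] (g : ZMod n → DihedralGroup n) (hg : Function.Injective g)
    (q : DihedralGroup n → Prop) :
    Set.ncard {z | (∃ k, z = g k) ∧ q z} = (Finset.univ.filter fun k => q (g k)).card := by
  have himg : {z | (∃ k, z = g k) ∧ q z} = g '' {k | q (g k)} := by
    ext z
    constructor
    · rintro ⟨⟨k, rfl⟩, hq⟩; exact ⟨k, hq, rfl⟩
    · rintro ⟨k, hq, rfl⟩; exact ⟨⟨k, rfl⟩, hq⟩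
  rw [himg, Set.ncard_image_of_injective _ hg, Set.ncard_eq_toFinset_card']
  congr 1
  ext k
  simp

lemma count_u [NeZero n] {H : Set (DihedralGroup n)} (hH : ConnectingSet H) (i : Fin n)
    (a : ZMod n → ℤ) (ha : ∀ t, a t = if DihedralGroup.r t ∈ H then 1 else 0) :
    ((Set.ncard {z : DihedralGroup n | (∃ k, z = DihedralGroup.r k) ∧
      (CayleyGraph H).Adj (DihedralGroup.r (1 : ZMod n)) z ∧
      (CayleyGraph H).Adj z (DihedralGroup.r (((i : ℕ) + 1 : ℕ) : ZMod n))} : ℕ) : ℤ)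
    = ∑ k : ZMod n, a (((i : ℕ) : ZMod n) - k) * a k := by
  rw [ncard_helper _ r_injective, Finset.card_filter]
  push_cast
  have hterm : ∀ k : ZMod n,
      (if ((CayleyGraph H).Adj (DihedralGroup.r (1 : ZMod n)) (DihedralGroup.r k) ∧
          (CayleyGraph H).Adj (DihedralGroup.r k) (DihedralGroup.r ((((i:ℕ):ZMod n) + 1))))
        then (1:ℤ) else 0)
      = a (k - 1) * a ((((i:ℕ):ZMod n) + 1) - k) := by
    intro k
    have h1 : (CayleyGraph H).Adj (DihedralGroup.r (1 : ZMod n)) (DihedralGroup.r k) ↔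
        DihedralGroup.r (k - 1) ∈ H := by
      rw [adj_iff hH, r_inv]
      simp [sub_eq_add_neg]
    have h2 : (CayleyGraph H).Adj (DihedralGroup.r k) (DihedralGroup.r ((((i:ℕ):ZMod n) + 1))) ↔
        DihedralGroup.r ((((i:ℕ):ZMod n) + 1) - k) ∈ H := by
      rw [adj_iff hH, r_inv]
      simp [sub_eq_add_neg]
    rw [ha, ha]
    by_cases p1 : DihedralGroup.r (k - 1) ∈ H <;>
      by_cases p2 : DihedralGroup.r ((((i:ℕ):ZMod n) + 1) - k) ∈ H <;>
      simp [h1, h2, p1, p2]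
  rw [Finset.sum_congr rfl (fun k (_ : k ∈ Finset.univ) => hterm k)]
  rw [← Equiv.sum_comp (Equiv.addRight (1 : ZMod n))
    (fun k => a (k - 1) * a ((((i:ℕ):ZMod n) + 1) - k))]
  apply Finset.sum_congr rfl
  intro m _
  simp only [Equiv.coe_addRight]
  rw [show m + 1 - 1 = m by ring,
    show (((i:ℕ):ZMod n) + 1) - (m + 1) = ((i:ℕ):ZMod n) - m by ring, mul_comm]

lemma count_w [NeZero n] {H : Set (DihedralGroup n)} (hH : ConnectingSet H) (i : Fin n)
    (b : ZMod n → ℤ) (hb : ∀ t, b t = if DihedralGroup.sr (-t) ∈ H then 1 else 0) :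
    ((Set.ncard {z : DihedralGroup n | (∃ k, z = DihedralGroup.sr k) ∧
      (CayleyGraph H).Adj (DihedralGroup.r (1 : ZMod n)) z ∧
      (CayleyGraph H).Adj z (DihedralGroup.r (((i : ℕ) + 1 : ℕ) : ZMod n))} : ℕ) : ℤ)
    = ∑ k : ZMod n, b (((i : ℕ) : ZMod n) - k) * b (-k) := by
  rw [ncard_helper _ (fun a b h => by injection h), Finset.card_filter]
  push_cast
  have hterm : ∀ k : ZMod n,
      (if ((CayleyGraph H).Adj (DihedralGroup.r (1 : ZMod n)) (DihedralGroup.sr k) ∧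
          (CayleyGraph H).Adj (DihedralGroup.sr k) (DihedralGroup.r ((((i:ℕ):ZMod n) + 1))))
        then (1:ℤ) else 0)
      = b (1 - k) * b ((((i:ℕ):ZMod n) + 1) - k) := by
    intro k
    have h1 : (CayleyGraph H).Adj (DihedralGroup.r (1 : ZMod n)) (DihedralGroup.sr k) ↔
        DihedralGroup.sr (k - 1) ∈ H := by
      rw [adj_iff hH, r_inv]
      simp [sub_eq_add_neg]
    have h2 : (CayleyGraph H).Adj (DihedralGroup.sr k) (DihedralGroup.r ((((i:ℕ):ZMod n) + 1))) ↔
        DihedralGroup.sr (k - ((((i:ℕ):ZMod n)) + 1)) ∈ H := by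
      rw [adj_iff hH, sr_inv]
      simp
    rw [hb, hb, show -(1 - k) = k - 1 by ring,
      show -((((i:ℕ):ZMod n) + 1) - k) = k - ((((i:ℕ):ZMod n)) + 1) by ring]
    by_cases p1 : DihedralGroup.sr (k - 1) ∈ H <;>
      by_cases p2 : DihedralGroup.sr (k - ((((i:ℕ):ZMod n)) + 1)) ∈ H <;>
      simp [h1, h2, p1, p2]
  rw [Finset.sum_congr rfl (fun k (_ : k ∈ Finset.univ) => hterm k)]
  rw [← Equiv.sum_comp (Equiv.addRight (1 : ZMod n))
    (fun k => b (1 - k) * b ((((i:ℕ):ZMod n) + 1) - k))]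
  apply Finset.sum_congr rfl
  intro m _
  simp only [Equiv.coe_addRight]
  rw [show (1 : ZMod n) - (m + 1) = -m by ring,
    show (((i:ℕ):ZMod n) + 1) - (m + 1) = ((i:ℕ):ZMod n) - m by ring, mul_comm]

lemma block_eq (hH : ConnectingSet H) :
    (((CayleyGraph H).adjMatrix ℤ).submatrix (sumEquiv n) (sumEquiv n)) =
      Matrix.fromBlocks
        (Matrix.circulant (fun t => if DihedralGroup.r t ∈ H then (1:ℤ) else 0))
        (Matrix.circulant (fun t => if DihedralGroup.sr (-t) ∈ H then (1:ℤ) else 0))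
        (Matrix.circulant (fun t => if DihedralGroup.sr (-(-t)) ∈ H then (1:ℤ) else 0))
        (Matrix.circulant (fun t => if DihedralGroup.r t ∈ H then (1:ℤ) else 0)) := by
  have hsH : ∀ t : ZMod n, DihedralGroup.r t ∈ H ↔ DihedralGroup.r (-t) ∈ H := by
    intro t
    constructor <;> intro h
    · have := hH.1 _ h; rwa [r_inv] at this
    · have := hH.1 _ h; rwa [r_inv, neg_neg] at this
  ext x y
  rcases x with i | i <;> rcases y with j | j <;>
    simp only [Matrix.submatrix_apply, sumEquiv_inl, sumEquiv_inr,
      Matrix.fromBlocks_apply₁₁, Matrix.fromBlocks_apply₁₂,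
      Matrix.fromBlocks_apply₂₁, Matrix.fromBlocks_apply₂₂,
      SimpleGraph.adjMatrix_apply, Matrix.circulant_apply]
  · refine if_congr ?_ rfl rfl
    rw [adj_iff hH, r_inv, DihedralGroup.r_mul_r,
      show j + -i = -(i - j) by ring, ← hsH]
  · refine if_congr ?_ rfl rfl
    rw [adj_iff hH, r_inv, DihedralGroup.sr_mul_r,
      show j + -i = -(i - j) by ring]
  · refine if_congr ?_ rfl rfl
    rw [adj_iff hH, sr_inv, DihedralGroup.r_mul_sr, neg_neg]
  · refine if_congr ?_ rfl rfl
    rw [adj_iff hH, sr_inv, DihedralGroup.sr_mul_sr]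


end Stmt17Aux

/-- A dihedral Cayley graph Γ = Cay(D_n,H) is singular iff some cyclotomic polynomial
Φ_d with d ∣ n divides Ψ'_Γ(x) − Ψ''_Γ(x), where u_i (resp. w_i) counts walks of length 2
from a to a^i with intermediate vertex a rotation (resp. a reflection). -/
theorem stmt17 (n : ℕ) [NeZero n] (H : Set (DihedralGroup n)) (hH : ConnectingSet H)
    (u w : Fin n → ℕ)
    (hu : ∀ i : Fin n, u i = Set.ncard {z : DihedralGroup n | (∃ k, z = DihedralGroup.r k) ∧
      (CayleyGraph H).Adj (DihedralGroup.r (1 : ZMod n)) z ∧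
      (CayleyGraph H).Adj z (DihedralGroup.r (((i : ℕ) + 1 : ℕ) : ZMod n))})
    (hw : ∀ i : Fin n, w i = Set.ncard {z : DihedralGroup n | (∃ k, z = DihedralGroup.sr k) ∧
      (CayleyGraph H).Adj (DihedralGroup.r (1 : ZMod n)) z ∧
      (CayleyGraph H).Adj z (DihedralGroup.r (((i : ℕ) + 1 : ℕ) : ZMod n))}) :
    ((CayleyGraph H).adjMatrix ℤ).det = 0 ↔ ∃ d ∈ n.divisors,
      cyclotomic d ℤ ∣ (∑ i : Fin n, C ((u i : ℤ)) * X ^ (i : ℕ)) -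
        (∑ i : Fin n, C ((w i : ℤ)) * X ^ (i : ℕ)) := by
  set a : ZMod n → ℤ := fun t => if DihedralGroup.r t ∈ H then 1 else 0 with hadef
  set b : ZMod n → ℤ := fun t => if DihedralGroup.sr (-t) ∈ H then 1 else 0 with hbdef
  set A := Matrix.circulant a with hAdef
  set B := Matrix.circulant b with hBdef
  set Bt := Matrix.circulant (fun t => b (-t)) with hBtdef
  set c : ZMod n → ℤ :=
    fun m => (Matrix.mulVec (Matrix.circulant a) a) m - (Matrix.mulVec (Matrix.circulant b) (fun t => b (-t))) m with hcdef
  -- step 1 : det M = det (fromBlocks A B Bt A)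
  have hMN : ((CayleyGraph H).adjMatrix ℤ).det = (Matrix.fromBlocks A B Bt A).det := by
    rw [← Matrix.det_submatrix_equiv_self (Stmt17Aux.sumEquiv n), Stmt17Aux.block_eq hH]
  -- step 2 : blocks commute, conjugate by J, square trick
  have hcomm : ∀ (v₁ v₂ : ZMod n → ℤ),
      Matrix.circulant v₁ * Matrix.circulant v₂ = Matrix.circulant v₂ * Matrix.circulant v₁ :=
    fun v₁ v₂ => Matrix.circulant_mul_comm v₁ v₂
  set CC := A * A - B * Bt with hCCdef
  set N := Matrix.fromBlocks A B Bt A with hNdef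
  set N' := Matrix.fromBlocks A (-B) (-Bt) A with hN'def
  set J := Matrix.fromBlocks (1 : Matrix (ZMod n) (ZMod n) ℤ) 0 0
    (-1 : Matrix (ZMod n) (ZMod n) ℤ) with hJdef
  have hJN : J * N * J = N' := by
    rw [hJdef, hNdef, hN'def, Matrix.fromBlocks_multiply, Matrix.fromBlocks_multiply]
    congr 1 <;> simp [Matrix.neg_mul, Matrix.mul_neg]
  have hJJ : J * J = (1 : Matrix ((ZMod n) ⊕ (ZMod n)) ((ZMod n) ⊕ (ZMod n)) ℤ) := by
    rw [hJdef, Matrix.fromBlocks_multiply, ← Matrix.fromBlocks_one]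
    congr 1 <;> simp
  have hdetN' : N'.det = N.det := by
    rw [← hJN, Matrix.det_mul, Matrix.det_mul]
    have h2 : J.det * J.det = 1 := by
      rw [← Matrix.det_mul, hJJ, Matrix.det_one]
    calc J.det * N.det * J.det = J.det * J.det * N.det := by ring
      _ = N.det := by rw [h2, one_mul]
  have hNN' : N * N' = Matrix.fromBlocks CC 0 0 CC := by
    rw [hNdef, hN'def, Matrix.fromBlocks_multiply]
    have e11 : A * A + B * -Bt = CC := by
      rw [Matrix.mul_neg, ← sub_eq_add_neg, hCCdef]
    have e12 : A * -B + B * A = 0 := by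
      rw [Matrix.mul_neg, hAdef, hBdef, hcomm b a, neg_add_cancel]
    have e21 : Bt * A + A * -Bt = 0 := by
      rw [Matrix.mul_neg, hAdef, hBtdef, hcomm (fun t => b (-t)) a, add_neg_cancel]
    have e22 : Bt * -B + A * A = CC := by
      rw [Matrix.mul_neg, hBdef, hBtdef, hcomm (fun t => b (-t)) b, neg_add_eq_sub, hCCdef]
    rw [e11, e12, e21, e22]
  have hdet2 : N.det ^ 2 = CC.det ^ 2 := by
    have h := congrArg Matrix.det hNN'
    rw [Matrix.det_mul, hdetN', Matrix.det_fromBlocks_zero₂₁] at h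
    rw [sq, sq, h]
  have hMC : ((CayleyGraph H).adjMatrix ℤ).det = 0 ↔ CC.det = 0 := by
    rw [hMN]
    constructor <;> intro h0
    · have h2 : CC.det ^ 2 = 0 := by rw [← hdet2, h0]; ring
      exact pow_eq_zero_iff two_ne_zero |>.mp h2
    · have h2 : N.det ^ 2 = 0 := by rw [hdet2, h0]; ring
      exact pow_eq_zero_iff two_ne_zero |>.mp h2
  have hCC : CC = Matrix.circulant c := by
    rw [hCCdef, hAdef, hBdef, hBtdef, Matrix.circulant_mul, Matrix.circulant_mul,
      ← Matrix.circulant_sub]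
    rfl
  have hc : ∀ i : Fin n, c (((i : ℕ)) : ZMod n) = (u i : ℤ) - (w i : ℤ) := by
    intro i
    have h1 : ((u i : ℕ) : ℤ) = (Matrix.mulVec (Matrix.circulant a) a) (((i : ℕ)) : ZMod n) := by
      rw [hu i, Stmt17Aux.count_u hH i a (fun t => rfl)]
      simp [Matrix.mulVec, Matrix.circulant_apply, dotProduct]
    have h2 : ((w i : ℕ) : ℤ) = (Matrix.mulVec (Matrix.circulant b) (fun t => b (-t))) (((i : ℕ)) : ZMod n) := by
      rw [hw i, Stmt17Aux.count_w hH i b (fun t => rfl)]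
      simp [Matrix.mulVec, Matrix.circulant_apply, dotProduct]
    rw [hcdef]
    dsimp only
    rw [← h1, ← h2]
  have hPoly : (∑ i : Fin n, C ((u i : ℤ)) * X ^ (i : ℕ)) -
      (∑ i : Fin n, C ((w i : ℤ)) * X ^ (i : ℕ))
      = ∑ i : Fin n, C (c (((i : ℕ)) : ZMod n)) * X ^ (i : ℕ) := by
    rw [← Finset.sum_sub_distrib]
    apply Finset.sum_congr rfl
    intro i _
    rw [← sub_mul, ← C_sub, hc i]
  have hAe : ∀ ζ : ℂ, (aeval ζ) (∑ i : Fin n, C (c (((i : ℕ)) : ZMod n)) * X ^ (i : ℕ))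
      = ∑ m : ZMod n, (c m : ℂ) * ζ ^ m.val := by
    intro ζ
    rw [map_sum, ← Equiv.sum_comp (Stmt17Aux.finEquiv n) (fun m => (c m : ℂ) * ζ ^ m.val)]
    apply Finset.sum_congr rfl
    intro i _
    simp only [map_mul, map_pow, aeval_X, aeval_C, Stmt17Aux.finEquiv_apply, Stmt17Aux.finEquiv_val]
    rw [ZMod.val_cast_of_lt i.isLt]
    simp [algebraMap_int_eq]
  rw [hMC, hCC, Stmt17Aux.det_circulant_eq_zero_iff c, hPoly,
    ← Stmt17Aux.exists_root_iff_cyclotomic n (NeZero.ne n)]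
  apply exists_congr
  intro ζ
  apply and_congr_right
  intro _
  rw [hAe ζ]
end

section
/- Let Γ = Cay(D_n, H), let v be a rotation vertex and T its set of neighbours. If |T ∩ C_n| = |T ∩ (D_n ∖ C_n)|, then Γ is singular. -/
open Polynomial
open scoped Classical

lemma cayley_adj {G : Type*} [Group G] {H : Set G} (hH : ConnectingSet H) (u v : G) :
    (CayleyGraph H).Adj u v ↔ v * u⁻¹ ∈ H := by
  obtain ⟨hinv, hone, -⟩ := hH
  constructor
  · rintro ⟨hne, hmem | hmem⟩
    · exact hmem
    · have := hinv _ hmem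
      simpa [mul_inv_rev] using this
  · intro hmem
    refine ⟨fun he => hone ?_, Or.inl hmem⟩
    subst he; simpa using hmem

/-- If a rotation vertex of a dihedral Cayley graph has as many rotation neighbours as
reflection neighbours, then the graph is singular. -/
theorem stmt18 (n : ℕ) [NeZero n] (H : Set (DihedralGroup n)) (hH : ConnectingSet H)
    (k : ZMod n)
    (h : Set.ncard {z : DihedralGroup n |
          (CayleyGraph H).Adj (DihedralGroup.r k) z ∧ ∃ m, z = DihedralGroup.r m} =
        Set.ncard {z : DihedralGroup n |
          (CayleyGraph H).Adj (DihedralGroup.r k) z ∧ ∃ m, z = DihedralGroup.sr m}) :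
    ((CayleyGraph H).adjMatrix ℝ).det = 0 := by
  classical
  set x : DihedralGroup n → ℝ := fun g => match g with
    | DihedralGroup.r _ => (1 : ℝ)
    | DihedralGroup.sr _ => (-1 : ℝ) with hx
  -- reindex the neighbour sets to H
  have key : ∀ (P : DihedralGroup n → Prop),
      {z : DihedralGroup n | (CayleyGraph H).Adj (DihedralGroup.r k) z ∧ P z} =
        (fun w => w * DihedralGroup.r k) ''
          {w : DihedralGroup n | w ∈ H ∧ P (w * DihedralGroup.r k)} := by
    intro P
    ext z
    simp only [Set.mem_setOf_eq, Set.mem_image, cayley_adj hH]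
    constructor
    · rintro ⟨hz, hP⟩
      exact ⟨z * (DihedralGroup.r k)⁻¹, ⟨hz, by rwa [inv_mul_cancel_right]⟩, by group⟩
    · rintro ⟨w, ⟨hw, hP⟩, rfl⟩
      exact ⟨by rwa [mul_inv_cancel_right], hP⟩
  have hinj : Function.Injective (fun w : DihedralGroup n => w * DihedralGroup.r k) :=
    mul_left_injective _
  set A : Finset (DihedralGroup n) := Finset.univ.filter
    (fun w => w ∈ H ∧ ∃ m, w * DihedralGroup.r k = DihedralGroup.r m) with hA
  set B : Finset (DihedralGroup n) := Finset.univ.filter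
    (fun w => w ∈ H ∧ ∃ m, w * DihedralGroup.r k = DihedralGroup.sr m) with hB
  have hcardAB : A.card = B.card := by
    have h1 := key (fun z => ∃ m, z = DihedralGroup.r m)
    have h2 := key (fun z => ∃ m, z = DihedralGroup.sr m)
    rw [h1, h2, Set.ncard_image_of_injective _ hinj,
      Set.ncard_image_of_injective _ hinj] at h
    rw [Set.ncard_eq_toFinset_card', Set.ncard_eq_toFinset_card'] at h
    simpa [hA, hB, Set.toFinset_setOf] using h
  have hAmem : ∀ w : DihedralGroup n, w ∈ A ↔ w ∈ H ∧ ∃ m, w = DihedralGroup.r m := by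
    intro w
    rcases w with i | i
    · simp [hA, DihedralGroup.r_mul_r]
    · simp [hA, DihedralGroup.sr_mul_r]
  have hBmem : ∀ w : DihedralGroup n, w ∈ B ↔ w ∈ H ∧ ∃ m, w = DihedralGroup.sr m := by
    intro w
    rcases w with i | i
    · simp [hB, DihedralGroup.r_mul_r]
    · simp [hB, DihedralGroup.sr_mul_r]
  have hsplit : (Finset.univ.filter (fun w : DihedralGroup n => w ∈ H)) = A ∪ B := by
    ext w
    rcases w with i | i
    · simp [hAmem, hBmem, Finset.mem_union]
    · simp [hAmem, hBmem, Finset.mem_union]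
  have hdisj : Disjoint A B := by
    rw [Finset.disjoint_left]
    intro w hwa hwb
    obtain ⟨-, m, rfl⟩ := (hAmem w).mp hwa
    obtain ⟨-, m', hm'⟩ := (hBmem _).mp hwb
    exact absurd hm' (by simp)
  have hS : ∑ w ∈ Finset.univ.filter (fun w : DihedralGroup n => w ∈ H), x w = 0 := by
    rw [hsplit, Finset.sum_union hdisj]
    have hA1 : ∑ w ∈ A, x w = A.card := by
      have : ∑ w ∈ A, x w = ∑ w ∈ A, (1 : ℝ) := by
        refine Finset.sum_congr rfl (fun w hw => ?_)
        obtain ⟨-, m, rfl⟩ := (hAmem w).mp hw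
        rfl
      rw [this, Finset.sum_const, nsmul_eq_mul, mul_one]
    have hB1 : ∑ w ∈ B, x w = -B.card := by
      have : ∑ w ∈ B, x w = ∑ w ∈ B, (-1 : ℝ) := by
        refine Finset.sum_congr rfl (fun w hw => ?_)
        obtain ⟨-, m, rfl⟩ := (hBmem w).mp hw
        rfl
      rw [this, Finset.sum_const, nsmul_eq_mul, mul_neg_one]
    rw [hA1, hB1, hcardAB]
    ring
  rw [← Matrix.exists_mulVec_eq_zero_iff]
  refine ⟨x, ?_, ?_⟩
  · intro hx0
    have : x (DihedralGroup.r 0) = 0 := by rw [hx0]; rfl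
    norm_num [hx] at this
  · funext u
    rw [Pi.zero_apply, SimpleGraph.adjMatrix_mulVec_apply]
    have hnb : (CayleyGraph H).neighborFinset u
        = Finset.univ.filter (fun v => v * u⁻¹ ∈ H) := by
      ext v
      rw [SimpleGraph.mem_neighborFinset, cayley_adj hH, Finset.mem_filter]
      simp
    rw [hnb]
    have hbij := Finset.sum_bij
      (i := fun (w : DihedralGroup n) (_ : w ∈ Finset.univ.filter (fun w : DihedralGroup n => w ∈ H)) => w * u)
      (s := Finset.univ.filter (fun w : DihedralGroup n => w ∈ H))
      (t := Finset.univ.filter (fun v : DihedralGroup n => v * u⁻¹ ∈ H))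
      (f := fun w => x (w * u)) (g := x)
      (by intro w hw; simp at hw ⊢; simpa using hw)
      (by intro a ha b hb hab; exact mul_left_injective u hab)
      (by intro v hv; simp at hv; exact ⟨v * u⁻¹, by simpa using hv, by group⟩)
      (by intro w hw; rfl)
    rw [← hbij]
    rcases u with j | j
    · calc ∑ w ∈ Finset.univ.filter (fun w : DihedralGroup n => w ∈ H), x (w * DihedralGroup.r j)
          = ∑ w ∈ Finset.univ.filter (fun w : DihedralGroup n => w ∈ H), x w := by
            refine Finset.sum_congr rfl (fun w _ => ?_)
            rcases w with i | i <;> rfl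
        _ = 0 := hS
    · calc ∑ w ∈ Finset.univ.filter (fun w : DihedralGroup n => w ∈ H), x (w * DihedralGroup.sr j)
          = ∑ w ∈ Finset.univ.filter (fun w : DihedralGroup n => w ∈ H), -x w := by
            refine Finset.sum_congr rfl (fun w _ => ?_)
            rcases w with i | i <;> simp [hx, DihedralGroup.r_mul_sr, DihedralGroup.sr_mul_sr]
        _ = 0 := by rw [Finset.sum_neg_distrib, hS, neg_zero]
end
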